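/- Let D ⊆ ℝ² be open, let z, b, l : D → E⁴ be smooth maps such that at each point ⟨z_u, z_v⟩ = 0, E := ⟨z_u, z_u⟩ > 0, G := ⟨z_v, z_v⟩ > 0, and the four vectors z_u/√E, z_v/√G, b, l form an orthonormal frame of E⁴. Assume ⟨z_uu, l⟩ = 0 and ⟨z_vv, l⟩ = 0 on D. Define ν₁ = ⟨z_uu, b⟩/E, ν₂ = ⟨z_vv, b⟩/G, λ = ⟨z_uv, b⟩/√(EG), μ = ⟨z_uv, l⟩/√(EG), γ₁ = −(1/√G)·∂(ln √E)/∂v, γ₂ = −(1/√E)·∂(ln √G)/∂u. Then at every point of D the Gauss equation holds: ν₁ν₂ − (λ² + μ²) = (1/√E)·∂γ₂/∂u + (1/√G)·∂γ₁/∂v − (γ₁² + γ₂²). -/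

import Mathlib

open scoped RealInnerProductSpace

/-- Partial derivative in the first variable. -/
noncomputable def pu {F : Type*} [NormedAddCommGroup F] [NormedSpace ℝ F]
    (f : ℝ × ℝ → F) (p : ℝ × ℝ) : F := fderiv ℝ f p (1, 0)

/-- Partial derivative in the second variable. -/
noncomputable def pv {F : Type*} [NormedAddCommGroup F] [NormedSpace ℝ F]
    (f : ℝ × ℝ → F) (p : ℝ × ℝ) : F := fderiv ℝ f p (0, 1)

section Helpers

variable {F : Type*} [NormedAddCommGroup F] [NormedSpace ℝ F]
variable {H : Type*} [NormedAddCommGroup H] [InnerProductSpace ℝ H]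

lemma pu_eq {f : ℝ × ℝ → F} {f' : ℝ × ℝ →L[ℝ] F} {p : ℝ × ℝ}
    (h : HasFDerivAt f f' p) : pu f p = f' (1, 0) := by rw [pu, h.fderiv]

lemma pv_eq {f : ℝ × ℝ → F} {f' : ℝ × ℝ →L[ℝ] F} {p : ℝ × ℝ}
    (h : HasFDerivAt f f' p) : pv f p = f' (0, 1) := by rw [pv, h.fderiv]

lemma pu_congr {f g : ℝ × ℝ → F} {p : ℝ × ℝ} (h : f =ᶠ[nhds p] g) :
    pu f p = pu g p := by unfold pu; rw [h.fderiv_eq]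

lemma pv_congr {f g : ℝ × ℝ → F} {p : ℝ × ℝ} (h : f =ᶠ[nhds p] g) :
    pv f p = pv g p := by unfold pv; rw [h.fderiv_eq]

lemma contDiffOn_pu {f : ℝ × ℝ → F} {D : Set (ℝ × ℝ)} (hD : IsOpen D)
    (hf : ContDiffOn ℝ (⊤ : ℕ∞) f D) : ContDiffOn ℝ (⊤ : ℕ∞) (pu f) D :=
  (hf.fderiv_of_isOpen hD (by simp)).clm_apply contDiffOn_const

lemma contDiffOn_pv {f : ℝ × ℝ → F} {D : Set (ℝ × ℝ)} (hD : IsOpen D)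
    (hf : ContDiffOn ℝ (⊤ : ℕ∞) f D) : ContDiffOn ℝ (⊤ : ℕ∞) (pv f) D :=
  (hf.fderiv_of_isOpen hD (by simp)).clm_apply contDiffOn_const

lemma diffAt_of_top {f : ℝ × ℝ → F} {D : Set (ℝ × ℝ)} {q : ℝ × ℝ} (hD : IsOpen D)
    (hf : ContDiffOn ℝ (⊤ : ℕ∞) f D) (hq : q ∈ D) : DifferentiableAt ℝ f q :=
  (hf.contDiffAt (hD.mem_nhds hq)).differentiableAt (by simp)

lemma pu_inner {f g : ℝ × ℝ → H} {p : ℝ × ℝ}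
    (hf : DifferentiableAt ℝ f p) (hg : DifferentiableAt ℝ g p) :
    pu (fun q => ⟪f q, g q⟫) p = ⟪pu f p, g p⟫ + ⟪f p, pu g p⟫ := by
  rw [pu_eq (hf.hasFDerivAt.inner ℝ hg.hasFDerivAt)]
  simp [pu, real_inner_comm, add_comm]

lemma pv_inner {f g : ℝ × ℝ → H} {p : ℝ × ℝ}
    (hf : DifferentiableAt ℝ f p) (hg : DifferentiableAt ℝ g p) :
    pv (fun q => ⟪f q, g q⟫) p = ⟪pv f p, g p⟫ + ⟪f p, pv g p⟫ := by
  rw [pv_eq (hf.hasFDerivAt.inner ℝ hg.hasFDerivAt)]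
  simp [pv, real_inner_comm, add_comm]

lemma pu_pv_symm {f : ℝ × ℝ → F} {p : ℝ × ℝ} (hf : ContDiffAt ℝ 2 f p) :
    pv (pu f) p = pu (pv f) p := by
  have hs : IsSymmSndFDerivAt ℝ f p := hf.isSymmSndFDerivAt (by simp)
  have hd : DifferentiableAt ℝ (fderiv ℝ f) p :=
    (hf.fderiv_right (m := 1) (by norm_num)).differentiableAt (by simp)
  have h1 : HasFDerivAt (pu f)
      ((ContinuousLinearMap.apply ℝ F ((1 : ℝ), (0 : ℝ))).comp (fderiv ℝ (fderiv ℝ f) p)) p :=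
    (ContinuousLinearMap.apply ℝ F ((1 : ℝ), (0 : ℝ))).hasFDerivAt.comp p hd.hasFDerivAt
  have h2 : HasFDerivAt (pv f)
      ((ContinuousLinearMap.apply ℝ F ((0 : ℝ), (1 : ℝ))).comp (fderiv ℝ (fderiv ℝ f) p)) p :=
    (ContinuousLinearMap.apply ℝ F ((0 : ℝ), (1 : ℝ))).hasFDerivAt.comp p hd.hasFDerivAt
  rw [pv_eq h1, pu_eq h2]
  simpa using hs (0, 1) (1, 0)

lemma hasFDerivAt_inv_comp {f : ℝ × ℝ → ℝ} {f' : ℝ × ℝ →L[ℝ] ℝ} {p : ℝ × ℝ}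
    (hf : HasFDerivAt f f' p) (h0 : f p ≠ 0) :
    HasFDerivAt (fun q => (f q)⁻¹) ((-(f p ^ 2)⁻¹) • f') p :=
  (hasDerivAt_inv h0).comp_hasFDerivAt p hf

lemma parseval4 {w : Fin 4 → EuclideanSpace ℝ (Fin 4)} (hw : Orthonormal ℝ w)
    (x y : EuclideanSpace ℝ (Fin 4)) :
    ⟪x, y⟫ = ⟪x, w 0⟫ * ⟪w 0, y⟫ + ⟪x, w 1⟫ * ⟪w 1, y⟫
      + ⟪x, w 2⟫ * ⟪w 2, y⟫ + ⟪x, w 3⟫ * ⟪w 3, y⟫ := by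
  have hcard : Fintype.card (Fin 4) = Module.finrank ℝ (EuclideanSpace ℝ (Fin 4)) := by simp
  set bb := basisOfOrthonormalOfCardEqFinrank hw hcard with hbb
  have hcoe : (bb : Fin 4 → EuclideanSpace ℝ (Fin 4)) = w :=
    coe_basisOfOrthonormalOfCardEqFinrank hw hcard
  have hon : Orthonormal ℝ (bb : Fin 4 → EuclideanSpace ℝ (Fin 4)) := by rwa [hcoe]
  have h := (bb.toOrthonormalBasis hon).sum_inner_mul_inner x y
  rw [Fin.sum_univ_four] at h
  simp only [Module.Basis.coe_toOrthonormalBasis, hcoe] at h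
  linarith [h]

end Helpers


lemma orthonormal_frame {u v bb ll : EuclideanSpace ℝ (Fin 4)} {a c E G : ℝ}
    (ha2 : a ^ 2 = E) (hc2 : c ^ 2 = G) (ha0 : 0 < a) (hc0 : 0 < c)
    (hEip : (⟪u, u⟫:ℝ) = E) (hGip : (⟪v, v⟫:ℝ) = G)
    (hF1 : (⟪u, v⟫:ℝ) = 0)
    (hbu : (⟪u, bb⟫:ℝ) = 0) (hbv : (⟪v, bb⟫:ℝ) = 0)
    (hlu : (⟪u, ll⟫:ℝ) = 0) (hlv : (⟪v, ll⟫:ℝ) = 0)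
    (hbl : (⟪bb, ll⟫:ℝ) = 0)
    (hbb : (⟪bb, bb⟫:ℝ) = 1) (hll : (⟪ll, ll⟫:ℝ) = 1) :
    Orthonormal ℝ ![a⁻¹ • u, c⁻¹ • v, bb, ll] := by
  have hF2 : (⟪v, u⟫:ℝ) = 0 := by rw [real_inner_comm]; exact hF1
  have hbu' : (⟪bb, u⟫:ℝ) = 0 := by rw [real_inner_comm]; exact hbu
  have hbv' : (⟪bb, v⟫:ℝ) = 0 := by rw [real_inner_comm]; exact hbv
  have hlu' : (⟪ll, u⟫:ℝ) = 0 := by rw [real_inner_comm]; exact hlu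
  have hlv' : (⟪ll, v⟫:ℝ) = 0 := by rw [real_inner_comm]; exact hlv
  have hlb : (⟪ll, bb⟫:ℝ) = 0 := by rw [real_inner_comm]; exact hbl
  rw [orthonormal_iff_ite]
  intro i j
  fin_cases i <;> fin_cases j <;>
    simp [-PiLp.inner_apply, -inner_self_eq_norm_sq_to_K, real_inner_smul_left, real_inner_smul_right, hEip,
      hGip, hF1, hF2, hbu, hbv, hlu, hlv, hbu', hbv', hlu', hlv', hlb, hbl,
      hbb, hll] <;>
    field_simp <;> nlinarith [ha2, hc2, ha0, hc0]

set_option maxHeartbeats 2000000 in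
/-- The Gauss equation for a surface in `𝔼⁴` with geometric frame
`{z_u/√E, z_v/√G, b, l}`: `ν₁ν₂ - (λ² + μ²) = x(γ₂) + y(γ₁) - (γ₁² + γ₂²)`. -/
theorem gauss_equation
    (D : Set (ℝ × ℝ)) (hDopen : IsOpen D)
    (z b l : ℝ × ℝ → EuclideanSpace ℝ (Fin 4))
    (hz : ContDiffOn ℝ (⊤ : ℕ∞) z D) (hb : ContDiffOn ℝ (⊤ : ℕ∞) b D) (hl : ContDiffOn ℝ (⊤ : ℕ∞) l D)
    (E G : ℝ × ℝ → ℝ)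
    (hE : ∀ p, E p = ⟪pu z p, pu z p⟫) (hG : ∀ p, G p = ⟪pv z p, pv z p⟫)
    (hEpos : ∀ p ∈ D, 0 < E p) (hGpos : ∀ p ∈ D, 0 < G p)
    (hFzero : ∀ p ∈ D, ⟪pu z p, pv z p⟫ = 0)
    (hbunit : ∀ p ∈ D, ⟪b p, b p⟫ = 1) (hlunit : ∀ p ∈ D, ⟪l p, l p⟫ = 1)
    (hbl : ∀ p ∈ D, ⟪b p, l p⟫ = 0)
    (hbtan : ∀ p ∈ D, ⟪pu z p, b p⟫ = 0 ∧ ⟪pv z p, b p⟫ = 0)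
    (hltan : ∀ p ∈ D, ⟪pu z p, l p⟫ = 0 ∧ ⟪pv z p, l p⟫ = 0)
    (hM : ∀ p ∈ D, ⟪pu (pu z) p, l p⟫ = 0 ∧ ⟪pv (pv z) p, l p⟫ = 0)
    (ν₁ ν₂ lam μ γ₁ γ₂ : ℝ × ℝ → ℝ)
    (hν₁ : ∀ p, ν₁ p = ⟪pu (pu z) p, b p⟫ / E p)
    (hν₂ : ∀ p, ν₂ p = ⟪pv (pv z) p, b p⟫ / G p)
    (hlam : ∀ p, lam p = ⟪pv (pu z) p, b p⟫ / Real.sqrt (E p * G p))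
    (hμ : ∀ p, μ p = ⟪pv (pu z) p, l p⟫ / Real.sqrt (E p * G p))
    (hγ₁ : ∀ p, γ₁ p = -(1 / Real.sqrt (G p))
      * pv (fun s => Real.log (Real.sqrt (E s))) p)
    (hγ₂ : ∀ p, γ₂ p = -(1 / Real.sqrt (E p))
      * pu (fun s => Real.log (Real.sqrt (G s))) p) :
    ∀ p ∈ D, ν₁ p * ν₂ p - (lam p ^ 2 + μ p ^ 2)
      = (1 / Real.sqrt (E p)) * pu γ₂ p + (1 / Real.sqrt (G p)) * pv γ₁ p
        - (γ₁ p ^ 2 + γ₂ p ^ 2) := by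
  -- smoothness of the derivative fields
  have hzu : ContDiffOn ℝ (⊤ : ℕ∞) (pu z) D := contDiffOn_pu hDopen hz
  have hzv : ContDiffOn ℝ (⊤ : ℕ∞) (pv z) D := contDiffOn_pv hDopen hz
  have hzuu : ContDiffOn ℝ (⊤ : ℕ∞) (pu (pu z)) D := contDiffOn_pu hDopen hzu
  have hzuv : ContDiffOn ℝ (⊤ : ℕ∞) (pv (pu z)) D := contDiffOn_pv hDopen hzu
  have hzvv : ContDiffOn ℝ (⊤ : ℕ∞) (pv (pv z)) D := contDiffOn_pv hDopen hzv
  have hEsm : ContDiffOn ℝ (⊤ : ℕ∞) E D :=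
    (ContDiffOn.inner ℝ hzu hzu).congr (fun q _ => hE q)
  have hGsm : ContDiffOn ℝ (⊤ : ℕ∞) G D :=
    (ContDiffOn.inner ℝ hzv hzv).congr (fun q _ => hG q)
  have hpvE : ContDiffOn ℝ (⊤ : ℕ∞) (pv E) D := contDiffOn_pv hDopen hEsm
  have hpuG : ContDiffOn ℝ (⊤ : ℕ∞) (pu G) D := contDiffOn_pu hDopen hGsm
  -- pointwise differentiability
  have dzu : ∀ q ∈ D, DifferentiableAt ℝ (pu z) q := fun q hq => diffAt_of_top hDopen hzu hq
  have dzv : ∀ q ∈ D, DifferentiableAt ℝ (pv z) q := fun q hq => diffAt_of_top hDopen hzv hq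
  have dzuu : ∀ q ∈ D, DifferentiableAt ℝ (pu (pu z)) q := fun q hq => diffAt_of_top hDopen hzuu hq
  have dzuv : ∀ q ∈ D, DifferentiableAt ℝ (pv (pu z)) q := fun q hq => diffAt_of_top hDopen hzuv hq
  have dzvv : ∀ q ∈ D, DifferentiableAt ℝ (pv (pv z)) q := fun q hq => diffAt_of_top hDopen hzvv hq
  have dE : ∀ q ∈ D, DifferentiableAt ℝ E q := fun q hq => diffAt_of_top hDopen hEsm hq
  have dG : ∀ q ∈ D, DifferentiableAt ℝ G q := fun q hq => diffAt_of_top hDopen hGsm hq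
  have dpvE : ∀ q ∈ D, DifferentiableAt ℝ (pv E) q := fun q hq => diffAt_of_top hDopen hpvE hq
  have dpuG : ∀ q ∈ D, DifferentiableAt ℝ (pu G) q := fun q hq => diffAt_of_top hDopen hpuG hq
  -- symmetry of second derivatives of z on D
  have hsymm : ∀ q ∈ D, pu (pv z) q = pv (pu z) q := fun q hq =>
    (pu_pv_symm ((hz.contDiffAt (hDopen.mem_nhds hq)).of_le (WithTop.coe_le_coe.mpr le_top))).symm
  -- first derivatives of E and G
  have hPuE : ∀ q ∈ D, pu E q = 2 * ⟪pu (pu z) q, pu z q⟫ := by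
    intro q hq
    have h1 : pu E q = pu (fun s => ⟪pu z s, pu z s⟫) q := by
      apply pu_congr; filter_upwards with s using hE s
    rw [h1, pu_inner (dzu q hq) (dzu q hq), real_inner_comm]; ring
  have hPvE : ∀ q ∈ D, pv E q = 2 * ⟪pv (pu z) q, pu z q⟫ := by
    intro q hq
    have h1 : pv E q = pv (fun s => ⟪pu z s, pu z s⟫) q := by
      apply pv_congr; filter_upwards with s using hE s
    rw [h1, pv_inner (dzu q hq) (dzu q hq), real_inner_comm]; ring
  have hPuG : ∀ q ∈ D, pu G q = 2 * ⟪pv (pu z) q, pv z q⟫ := by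
    intro q hq
    have h1 : pu G q = pu (fun s => ⟪pv z s, pv z s⟫) q := by
      apply pu_congr; filter_upwards with s using hG s
    rw [h1, pu_inner (dzv q hq) (dzv q hq), hsymm q hq, real_inner_comm (pv z q)]; ring
  have hPvG : ∀ q ∈ D, pv G q = 2 * ⟪pv (pv z) q, pv z q⟫ := by
    intro q hq
    have h1 : pv G q = pv (fun s => ⟪pv z s, pv z s⟫) q := by
      apply pv_congr; filter_upwards with s using hG s
    rw [h1, pv_inner (dzv q hq) (dzv q hq), real_inner_comm (pv z q)]; ring
  -- consequences of F = 0 on D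
  have hW : ∀ q ∈ D, ⟪pu (pu z) q, pv z q⟫ = (-(1:ℝ)/2) * pv E q := by
    intro q hq
    have hev : (fun s => ⟪pu z s, pv z s⟫) =ᶠ[nhds q] (fun _ => (0:ℝ)) :=
      Filter.eventuallyEq_of_mem (hDopen.mem_nhds hq) hFzero
    have h0 : pu (fun s => ⟪pu z s, pv z s⟫) q = 0 := by
      rw [pu_congr hev]; simp [pu]
    rw [pu_inner (dzu q hq) (dzv q hq)] at h0
    have h2 : ⟪pu z q, pu (pv z) q⟫ = pv E q / 2 := by
      rw [hsymm q hq, real_inner_comm, hPvE q hq]; ring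
    linarith [h0, h2]
  have hVV : ∀ q ∈ D, ⟪pv (pv z) q, pu z q⟫ = (-(1:ℝ)/2) * pu G q := by
    intro q hq
    have hev : (fun s => ⟪pu z s, pv z s⟫) =ᶠ[nhds q] (fun _ => (0:ℝ)) :=
      Filter.eventuallyEq_of_mem (hDopen.mem_nhds hq) hFzero
    have h0 : pv (fun s => ⟪pu z s, pv z s⟫) q = 0 := by
      rw [pv_congr hev]; simp [pv]
    rw [pv_inner (dzu q hq) (dzv q hq)] at h0
    have h2 : ⟪pv (pu z) q, pv z q⟫ = pu G q / 2 := by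
      rw [hPuG q hq]; ring
    rw [show (⟪pv (pv z) q, pu z q⟫:ℝ) = ⟪pu z q, pv (pv z) q⟫ from real_inner_comm _ _]
    linarith [h0, h2]
  -- now fix the point
  intro p hp
  have hmem : D ∈ nhds p := hDopen.mem_nhds hp
  have hE0 : 0 < E p := hEpos p hp
  have hG0 : 0 < G p := hGpos p hp
  have hcd2 : ContDiffAt ℝ 2 (pu z) p := (hzu.contDiffAt hmem).of_le (WithTop.coe_le_coe.mpr le_top)
  -- third derivative identities
  have hdW : ⟪pv (pu (pu z)) p, pv z p⟫ + ⟪pu (pu z) p, pv (pv z) p⟫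
      = (-(1:ℝ)/2) * pv (pv E) p := by
    have h1 : pv (fun q => ⟪pu (pu z) q, pv z q⟫) p
        = pv (fun q => (-(1:ℝ)/2) * pv E q) p :=
      pv_congr (Filter.eventuallyEq_of_mem hmem hW)
    rw [pv_inner (dzuu p hp) (dzv p hp)] at h1
    rw [pv_eq (((dpvE p hp).hasFDerivAt).const_mul ((-(1:ℝ)/2)))] at h1
    simpa [pv] using h1
  have hdV : ⟪pv (pu (pu z)) p, pv z p⟫ + ⟪pv (pu z) p, pv (pu z) p⟫
      = (1/2:ℝ) * pu (pu G) p := by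
    have h1 : pu (fun q => ⟪pv (pu z) q, pv z q⟫) p
        = pu (fun q => (1/2:ℝ) * pu G q) p := by
      apply pu_congr
      apply Filter.eventuallyEq_of_mem hmem
      intro q hq
      show (⟪pv (pu z) q, pv z q⟫:ℝ) = 1/2 * pu G q
      rw [hPuG q hq]; ring
    rw [pu_inner (dzuv p hp) (dzv p hp)] at h1
    rw [pu_eq (((dpuG p hp).hasFDerivAt).const_mul ((1:ℝ)/2))] at h1
    rw [← pu_pv_symm hcd2, hsymm p hp] at h1
    simpa [pu] using h1
  have hKey1 : ⟪pu (pu z) p, pv (pv z) p⟫ - ⟪pv (pu z) p, pv (pu z) p⟫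
      = (-(1:ℝ)/2) * pv (pv E) p - (1/2:ℝ) * pu (pu G) p := by
    linarith [hdW, hdV]
  -- abbreviations
  set a := Real.sqrt (E p) with ha
  set c := Real.sqrt (G p) with hc
  have ha2 : a ^ 2 = E p := Real.sq_sqrt hE0.le
  have hc2 : c ^ 2 = G p := Real.sq_sqrt hG0.le
  have ha0 : 0 < a := Real.sqrt_pos.mpr hE0
  have hc0 : 0 < c := Real.sqrt_pos.mpr hG0
  -- the orthonormal frame
  have hEip : (⟪pu z p, pu z p⟫:ℝ) = E p := (hE p).symm
  have hGip : (⟪pv z p, pv z p⟫:ℝ) = G p := (hG p).symm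
  have hF1 : (⟪pu z p, pv z p⟫:ℝ) = 0 := hFzero p hp
  have hF2 : (⟪pv z p, pu z p⟫:ℝ) = 0 := by rw [real_inner_comm]; exact hF1
  have hbu : (⟪pu z p, b p⟫:ℝ) = 0 := (hbtan p hp).1
  have hbv : (⟪pv z p, b p⟫:ℝ) = 0 := (hbtan p hp).2
  have hlu : (⟪pu z p, l p⟫:ℝ) = 0 := (hltan p hp).1
  have hlv : (⟪pv z p, l p⟫:ℝ) = 0 := (hltan p hp).2
  have hbu' : (⟪b p, pu z p⟫:ℝ) = 0 := by rw [real_inner_comm]; exact hbu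
  have hbv' : (⟪b p, pv z p⟫:ℝ) = 0 := by rw [real_inner_comm]; exact hbv
  have hlu' : (⟪l p, pu z p⟫:ℝ) = 0 := by rw [real_inner_comm]; exact hlu
  have hlv' : (⟪l p, pv z p⟫:ℝ) = 0 := by rw [real_inner_comm]; exact hlv
  have hlb : (⟪l p, b p⟫:ℝ) = 0 := by rw [real_inner_comm]; exact hbl p hp
  have hw : Orthonormal ℝ ![a⁻¹ • pu z p, c⁻¹ • pv z p, b p, l p] :=
    orthonormal_frame ha2 hc2 ha0 hc0 hEip hGip hF1 hbu hbv hlu hlv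
      (hbl p hp) (hbunit p hp) (hlunit p hp)
  -- component values at p
  have e1 : (⟪pu (pu z) p, pu z p⟫:ℝ) = pu E p / 2 := by rw [hPuE p hp]; ring
  have e2 : (⟪pu z p, pv (pv z) p⟫:ℝ) = -(1:ℝ)/2 * pu G p := by
    rw [real_inner_comm]; exact hVV p hp
  have e3 : (⟪pu (pu z) p, pv z p⟫:ℝ) = -(1:ℝ)/2 * pv E p := hW p hp
  have e4 : (⟪pv z p, pv (pv z) p⟫:ℝ) = pv G p / 2 := by
    rw [real_inner_comm, hPvG p hp]; ring
  have e5 : (⟪b p, pv (pv z) p⟫:ℝ) = ⟪pv (pv z) p, b p⟫ := real_inner_comm _ _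
  have e6 : (⟪pu (pu z) p, l p⟫:ℝ) = 0 := (hM p hp).1
  have e7 : (⟪l p, pv (pv z) p⟫:ℝ) = 0 := by rw [real_inner_comm]; exact (hM p hp).2
  have f1 : (⟪pv (pu z) p, pu z p⟫:ℝ) = pv E p / 2 := by rw [hPvE p hp]; ring
  have f2 : (⟪pu z p, pv (pu z) p⟫:ℝ) = pv E p / 2 := by rw [real_inner_comm]; exact f1
  have f3 : (⟪pv (pu z) p, pv z p⟫:ℝ) = pu G p / 2 := by rw [hPuG p hp]; ring
  have f4 : (⟪pv z p, pv (pu z) p⟫:ℝ) = pu G p / 2 := by rw [real_inner_comm]; exact f3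
  have f5 : (⟪b p, pv (pu z) p⟫:ℝ) = ⟪pv (pu z) p, b p⟫ := real_inner_comm _ _
  have f6 : (⟪l p, pv (pu z) p⟫:ℝ) = ⟪pv (pu z) p, l p⟫ := real_inner_comm _ _
  -- Parseval expansions
  have hIP1 : (⟪pu (pu z) p, pv (pv z) p⟫:ℝ)
      = (a⁻¹ * (pu E p / 2)) * (a⁻¹ * (-(1:ℝ)/2 * pu G p))
        + (c⁻¹ * (-(1:ℝ)/2 * pv E p)) * (c⁻¹ * (pv G p / 2))
        + ⟪pu (pu z) p, b p⟫ * ⟪pv (pv z) p, b p⟫ := by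
    have h := parseval4 hw (pu (pu z) p) (pv (pv z) p)
    simp only [Matrix.cons_val_zero, Matrix.cons_val_one, Matrix.head_cons,
      Matrix.cons_val_two, Matrix.tail_cons, Matrix.cons_val_three,
      real_inner_smul_left, real_inner_smul_right] at h
    rw [e1, e2, e3, e4, e5, e6, e7] at h
    linarith [h]
  have hIP2 : (⟪pv (pu z) p, pv (pu z) p⟫:ℝ)
      = (a⁻¹ * (pv E p / 2)) * (a⁻¹ * (pv E p / 2))
        + (c⁻¹ * (pu G p / 2)) * (c⁻¹ * (pu G p / 2))
        + ⟪pv (pu z) p, b p⟫ * ⟪pv (pu z) p, b p⟫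
        + ⟪pv (pu z) p, l p⟫ * ⟪pv (pu z) p, l p⟫ := by
    have h := parseval4 hw (pv (pu z) p) (pv (pu z) p)
    simp only [Matrix.cons_val_zero, Matrix.cons_val_one, Matrix.head_cons,
      Matrix.cons_val_two, Matrix.tail_cons, Matrix.cons_val_three,
      real_inner_smul_left, real_inner_smul_right] at h
    rw [f1, f2, f3, f4, f5, f6] at h
    linarith [h]
  -- the Gauss relation in scalar form
  have hKey : (⟪pu (pu z) p, b p⟫:ℝ) * ⟪pv (pv z) p, b p⟫
        - ⟪pv (pu z) p, b p⟫ * ⟪pv (pu z) p, b p⟫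
        - ⟪pv (pu z) p, l p⟫ * ⟪pv (pu z) p, l p⟫
      = (-(1:ℝ)/2) * pv (pv E) p - (1/2:ℝ) * pu (pu G) p
        + (a⁻¹ * (pv E p / 2)) * (a⁻¹ * (pv E p / 2))
        + (c⁻¹ * (pu G p / 2)) * (c⁻¹ * (pu G p / 2))
        - (a⁻¹ * (pu E p / 2)) * (a⁻¹ * (-(1:ℝ)/2 * pu G p))
        - (c⁻¹ * (-(1:ℝ)/2 * pv E p)) * (c⁻¹ * (pv G p / 2)) := by
    linear_combination hKey1 - hIP1 + hIP2
  -- the gamma functions in explicit form on D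
  have hcne : ∀ q ∈ D, Real.sqrt (G q) ≠ 0 := fun q hq => (Real.sqrt_pos.mpr (hGpos q hq)).ne'
  have hane : ∀ q ∈ D, Real.sqrt (E q) ≠ 0 := fun q hq => (Real.sqrt_pos.mpr (hEpos q hq)).ne'
  have hγ₁fun : ∀ q ∈ D, γ₁ q = -(pv E q) * (2 * E q * Real.sqrt (G q))⁻¹ := by
    intro q hq
    rw [hγ₁ q]
    have hev : (fun s => Real.log (Real.sqrt (E s))) =ᶠ[nhds q]
        (fun s => (1/2 : ℝ) * Real.log (E s)) := by
      filter_upwards [hDopen.mem_nhds hq] with s hs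
      rw [Real.log_sqrt (hEpos s hs).le]; ring
    have hlog : pv (fun s => Real.log (Real.sqrt (E s))) q = pv E q / (2 * E q) := by
      rw [pv_congr hev, pv_eq (((dE q hq).hasFDerivAt.log (hEpos q hq).ne').const_mul (1/2 : ℝ))]
      have : fderiv ℝ E q (0, 1) = pv E q := rfl
      simp only [ContinuousLinearMap.coe_smul', Pi.smul_apply, this, smul_eq_mul]
      field_simp
    rw [hlog]
    field_simp
  have hγ₂fun : ∀ q ∈ D, γ₂ q = -(pu G q) * (2 * G q * Real.sqrt (E q))⁻¹ := by
    intro q hq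
    rw [hγ₂ q]
    have hev : (fun s => Real.log (Real.sqrt (G s))) =ᶠ[nhds q]
        (fun s => (1/2 : ℝ) * Real.log (G s)) := by
      filter_upwards [hDopen.mem_nhds hq] with s hs
      rw [Real.log_sqrt (hGpos s hs).le]; ring
    have hlog : pu (fun s => Real.log (Real.sqrt (G s))) q = pu G q / (2 * G q) := by
      rw [pu_congr hev, pu_eq (((dG q hq).hasFDerivAt.log (hGpos q hq).ne').const_mul (1/2 : ℝ))]
      have : fderiv ℝ G q (1, 0) = pu G q := rfl
      simp only [ContinuousLinearMap.coe_smul', Pi.smul_apply, this, smul_eq_mul]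
      field_simp
    rw [hlog]
    field_simp
  -- derivative of γ₁ at p
  have hd10 : (2 * E p * Real.sqrt (G p)) ≠ 0 := by
    have := Real.sqrt_pos.mpr hG0
    positivity
  have hd20 : (2 * G p * Real.sqrt (E p)) ≠ 0 := by
    have := Real.sqrt_pos.mpr hE0
    positivity
  have hden1 : HasFDerivAt (fun q => 2 * E q * Real.sqrt (G q))
      ((2 * E p) • ((1 / (2 * Real.sqrt (G p))) • fderiv ℝ G p)
        + (Real.sqrt (G p)) • ((2:ℝ) • fderiv ℝ E p)) p :=
    ((dE p hp).hasFDerivAt.const_mul 2).mul ((dG p hp).hasFDerivAt.sqrt hG0.ne')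
  have hden2 : HasFDerivAt (fun q => 2 * G q * Real.sqrt (E q))
      ((2 * G p) • ((1 / (2 * Real.sqrt (E p))) • fderiv ℝ E p)
        + (Real.sqrt (E p)) • ((2:ℝ) • fderiv ℝ G p)) p :=
    ((dG p hp).hasFDerivAt.const_mul 2).mul ((dE p hp).hasFDerivAt.sqrt hE0.ne')
  have hf1 := ((dpvE p hp).hasFDerivAt.neg).mul (hasFDerivAt_inv_comp hden1 hd10)
  have hf2 := ((dpuG p hp).hasFDerivAt.neg).mul (hasFDerivAt_inv_comp hden2 hd20)
  have hpvγ₁ : pv γ₁ p = (-(pv (pv E) p) * (2 * E p * c)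
        + pv E p * (2 * pv E p * c + E p * pv G p / c)) / (2 * E p * c) ^ 2 := by
    have h0 : pv γ₁ p = pv (fun q => -(pv E q) * (2 * E q * Real.sqrt (G q))⁻¹) p :=
      pv_congr (Filter.eventuallyEq_of_mem hmem hγ₁fun)
    rw [h0, pv_eq (f := fun q => -(pv E q) * (2 * E q * Real.sqrt (G q))⁻¹) hf1, hc]
    have r1 : fderiv ℝ E p (0, 1) = pv E p := rfl
    have r2 : fderiv ℝ G p (0, 1) = pv G p := rfl
    have r3 : fderiv ℝ (pv E) p (0, 1) = pv (pv E) p := rfl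
    simp only [ContinuousLinearMap.add_apply, ContinuousLinearMap.coe_smul',
      Pi.smul_apply, ContinuousLinearMap.neg_apply, Pi.neg_apply, smul_eq_mul, r1, r2, r3]
    have hgne : Real.sqrt (G p) ≠ 0 := hcne p hp
    field_simp
    ring
  have hpuγ₂ : pu γ₂ p = (-(pu (pu G) p) * (2 * G p * a)
        + pu G p * (2 * pu G p * a + G p * pu E p / a)) / (2 * G p * a) ^ 2 := by
    have h0 : pu γ₂ p = pu (fun q => -(pu G q) * (2 * G q * Real.sqrt (E q))⁻¹) p :=
      pu_congr (Filter.eventuallyEq_of_mem hmem hγ₂fun)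
    rw [h0, pu_eq (f := fun q => -(pu G q) * (2 * G q * Real.sqrt (E q))⁻¹) hf2, ha]
    have r1 : fderiv ℝ E p (1, 0) = pu E p := rfl
    have r2 : fderiv ℝ G p (1, 0) = pu G p := rfl
    have r3 : fderiv ℝ (pu G) p (1, 0) = pu (pu G) p := rfl
    simp only [ContinuousLinearMap.add_apply, ContinuousLinearMap.coe_smul',
      Pi.smul_apply, ContinuousLinearMap.neg_apply, Pi.neg_apply, smul_eq_mul, r1, r2, r3]
    have hgne : Real.sqrt (E p) ≠ 0 := hane p hp
    field_simp
    ring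
  -- final assembly
  have hsqEG : Real.sqrt (E p * G p) = a * c := by
    rw [Real.sqrt_mul hE0.le, ← ha, ← hc]
  have hγ1p : γ₁ p = -(pv E p) * (2 * E p * c)⁻¹ := by
    rw [hγ₁fun p hp, ← hc]
  have hγ2p : γ₂ p = -(pu G p) * (2 * G p * a)⁻¹ := by
    rw [hγ₂fun p hp, ← ha]
  have hEa : E p = a ^ 2 := ha2.symm
  have hGc : G p = c ^ 2 := hc2.symm
  have step1 : ν₁ p * ν₂ p - (lam p ^ 2 + μ p ^ 2)
      = (⟪pu (pu z) p, b p⟫ * ⟪pv (pv z) p, b p⟫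
          - ⟪pv (pu z) p, b p⟫ * ⟪pv (pu z) p, b p⟫
          - ⟪pv (pu z) p, l p⟫ * ⟪pv (pu z) p, l p⟫) * (a ^ 2 * c ^ 2)⁻¹ := by
    rw [hν₁ p, hν₂ p, hlam p, hμ p, hsqEG, hEa, hGc]
    field_simp
    ring
  rw [step1, hKey, hpvγ₁, hpuγ₂, hγ1p, hγ2p, hEa, hGc]
  field_simp
  ring
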